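/- Let G be a group with finite generating set S and word norm ‖·‖, let λ : G → ℤ and δ : G × G → ℤ satisfy λ(φψ) = λ(φ) + λ(ψ) + 2δ(φ,ψ), and suppose |δ(φ,ψ)| ≤ C₂‖φ‖‖ψ‖ for all φ,ψ ∈ G and |λ(s)| ≤ C₃ for s ∈ S ∪ S⁻¹. Then for all φ ∈ G with ‖φ‖ = n ≥ 1, |λ(φ)| ≤ C₃·n + C₂·n(n−1). -/

import Mathlib

/-!
Write `φ = s₁ ⋯ sₙ` as a geodesic word. Peeling off the first letter, the cocycle relation gives
`|λ(s φ')| ≤ |λ(s)| + |λ(φ')| + 2|δ(s, φ')| ≤ C₃ + |λ(φ')| + 2 C₂ ‖φ'‖`, with `‖s‖ ≤ 1` and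
`‖φ'‖ ≤ n - 1`; summing these increments gives `C₃ n + C₂ n (n - 1)`.
-/

/-- The word norm on a group `G` with respect to a set `S`:
the minimal length of a word in `S ∪ S⁻¹` representing `g`. -/
noncomputable def wordNorm {G : Type*} [Group G] (S : Set G) (g : G) : ℕ :=
  sInf {n : ℕ | ∃ l : List G, (∀ x ∈ l, x ∈ S ∪ S⁻¹) ∧ l.length = n ∧ l.prod = g}

section WordNorm

variable {G : Type*} [Group G] (S : Set G)

lemma wordNorm_list_prod_le_length (l : List G) (hl : ∀ x ∈ l, x ∈ S ∪ S⁻¹) :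
    wordNorm S l.prod ≤ l.length :=
  Nat.sInf_le ⟨l, hl, rfl, rfl⟩

lemma wordNorm_one : wordNorm S (1 : G) = 0 :=
  Nat.le_zero.mp (wordNorm_list_prod_le_length S [] (by simp))

lemma wordNorm_le_one_of_mem {s : G} (hs : s ∈ S ∪ S⁻¹) : wordNorm S s ≤ 1 := by
  simpa using wordNorm_list_prod_le_length S [s] (by simpa using hs)

/-- An element outside the subgroup generated by `S` has the junk norm `sInf ∅ = 0`, so a positive
norm is always realised by a word. -/
lemma exists_list_prod_eq_of_wordNorm_ne_zero {g : G} (hg : wordNorm S g ≠ 0) :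
    ∃ l : List G, (∀ x ∈ l, x ∈ S ∪ S⁻¹) ∧ l.length = wordNorm S g ∧ l.prod = g := by
  change wordNorm S g ∈ {n | ∃ l : List G, (∀ x ∈ l, x ∈ S ∪ S⁻¹) ∧ l.length = n ∧ l.prod = g}
  exact Nat.sInf_mem (Set.nonempty_iff_ne_empty.mpr fun h => hg (Nat.sInf_eq_zero.mpr (Or.inr h)))

end WordNorm

section Morita

variable {G : Type*} [Group G] {S : Set G} {lam : G → ℤ} {del : G × G → ℤ} {C₂ C₃ : ℤ}

lemma lam_one_eq_zero
    (hMorita : ∀ φ ψ : G, lam (φ * ψ) = lam φ + lam ψ + 2 * del (φ, ψ))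
    (hdel : ∀ φ ψ : G, |del (φ, ψ)| ≤ C₂ * wordNorm S φ * wordNorm S ψ) :
    lam 1 = 0 := by
  have hdel_one : del (1, 1) = 0 := by simpa [wordNorm_one] using hdel 1 1
  have := hMorita 1 1
  rw [one_mul, hdel_one] at this
  linarith

lemma nonneg_of_abs_del_le {φ : G} (hφ : wordNorm S φ ≠ 0)
    (hdel : ∀ φ ψ : G, |del (φ, ψ)| ≤ C₂ * wordNorm S φ * wordNorm S ψ) : 0 ≤ C₂ := by
  have hpos : (0 : ℤ) < wordNorm S φ := by exact_mod_cast Nat.pos_of_ne_zero hφ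
  have := (abs_nonneg _).trans (hdel φ φ)
  rw [mul_assoc] at this
  exact nonneg_of_mul_nonneg_left this (mul_pos hpos hpos)

lemma abs_lam_mul_le
    (hMorita : ∀ φ ψ : G, lam (φ * ψ) = lam φ + lam ψ + 2 * del (φ, ψ)) (φ ψ : G) :
    |lam (φ * ψ)| ≤ |lam φ| + |lam ψ| + 2 * |del (φ, ψ)| := by
  rw [hMorita]
  calc |lam φ + lam ψ + 2 * del (φ, ψ)|
      ≤ |lam φ + lam ψ| + |2 * del (φ, ψ)| := abs_add_le _ _
    _ ≤ |lam φ| + |lam ψ| + 2 * |del (φ, ψ)| := by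
        rw [abs_mul, abs_two]
        linarith [abs_add_le (lam φ) (lam ψ)]

lemma abs_lam_list_prod_le (hC₂ : 0 ≤ C₂)
    (hMorita : ∀ φ ψ : G, lam (φ * ψ) = lam φ + lam ψ + 2 * del (φ, ψ))
    (hdel : ∀ φ ψ : G, |del (φ, ψ)| ≤ C₂ * wordNorm S φ * wordNorm S ψ)
    (hlam : ∀ s ∈ S ∪ S⁻¹, |lam s| ≤ C₃) :
    ∀ l : List G, (∀ x ∈ l, x ∈ S ∪ S⁻¹) →
      |lam l.prod| ≤ C₃ * l.length + C₂ * l.length * (l.length - 1)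
  | [], _ => by simp [lam_one_eq_zero hMorita hdel]
  | s :: t, hl => by
    have hs : s ∈ S ∪ S⁻¹ := hl s List.mem_cons_self
    have ht : ∀ x ∈ t, x ∈ S ∪ S⁻¹ := fun x hx => hl x (List.mem_cons_of_mem s hx)
    have hs_norm : (wordNorm S s : ℤ) ≤ 1 := by exact_mod_cast wordNorm_le_one_of_mem S hs
    have ht_norm : (wordNorm S t.prod : ℤ) ≤ t.length := by
      exact_mod_cast wordNorm_list_prod_le_length S t ht
    have hdel_st : |del (s, t.prod)| ≤ C₂ * t.length :=
      calc |del (s, t.prod)| ≤ C₂ * wordNorm S s * wordNorm S t.prod := hdel s t.prod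
        _ ≤ C₂ * 1 * t.length := by gcongr
        _ = C₂ * t.length := by ring
    have ih := abs_lam_list_prod_le hC₂ hMorita hdel hlam t ht
    rw [List.prod_cons, List.length_cons, Nat.cast_succ]
    linarith [abs_lam_mul_le hMorita s t.prod, hlam s hs]

end Morita

theorem stmt_19_general {G : Type*} [Group G] (S : Set G)
    (lam : G → ℤ) (del : G × G → ℤ)
    (hMorita : ∀ φ ψ : G, lam (φ * ψ) = lam φ + lam ψ + 2 * del (φ, ψ))
    (C₂ C₃ : ℤ)
    (hdel : ∀ φ ψ : G, |del (φ, ψ)| ≤ C₂ * wordNorm S φ * wordNorm S ψ)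
    (hlam : ∀ s ∈ S ∪ S⁻¹, |lam s| ≤ C₃) :
    ∀ (φ : G) (n : ℕ), wordNorm S φ = n → 1 ≤ n →
      |lam φ| ≤ C₃ * n + C₂ * n * (n - 1) := by
  rintro φ n rfl hn
  have hφ : wordNorm S φ ≠ 0 := Nat.one_le_iff_ne_zero.mp hn
  have hC₂ := nonneg_of_abs_del_le hφ hdel
  obtain ⟨l, hl, hlen, rfl⟩ := exists_list_prod_eq_of_wordNorm_ne_zero S hφ
  simpa only [hlen] using abs_lam_list_prod_le hC₂ hMorita hdel hlam l hl

theorem stmt_19 {G : Type*} [Group G] (S : Set G) (hSfin : S.Finite)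
    (hSgen : Subgroup.closure S = ⊤)
    (lam : G → ℤ) (del : G × G → ℤ)
    (hMorita : ∀ φ ψ : G, lam (φ * ψ) = lam φ + lam ψ + 2 * del (φ, ψ))
    (C₂ C₃ : ℤ)
    (hdel : ∀ φ ψ : G, |del (φ, ψ)| ≤ C₂ * wordNorm S φ * wordNorm S ψ)
    (hlam : ∀ s ∈ S ∪ S⁻¹, |lam s| ≤ C₃) :
    ∀ (φ : G) (n : ℕ), wordNorm S φ = n → 1 ≤ n →
      |lam φ| ≤ C₃ * n + C₂ * n * (n - 1) :=
  stmt_19_general S lam del hMorita C₂ C₃ hdel hlam
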